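/- Let ξ be a real irrational number and let α, β be real numbers with 0 < α < 1, β > 1 and μ(ξ) < 1 − (log β)/(log α). Then there exist integer sequences (u_n)_{n≥1} and (v_n)_{n≥1} such that lim_{n→∞} (u_n ξ − v_n)/α^n = 1 and lim_{n→∞} u_n/β^n = 1. -/

import Mathlib

open Filter Topology

/-!
Fix `μ` with `μ(ξ) < μ < 1 - log β / log α`. Then `|qξ - p| ≥ c q^(1-μ)` for all `q ≥ 1`, and
`μ ≥ 2` by Dirichlet. Again by Dirichlet there is `q ≤ 1/s` with `θ = qξ - p` of size `< s`, and
the lower bound gives `|θ| ≥ c s^(μ-1)`; so a multiple `jθ` lies within `s/2` of any `y` with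
`|y| ≤ s`, and `|jq| ≲ s^(1-μ)`. Halving the error repeatedly, every `y` lies within `δ` of some
`kξ - p` with `|k| ≲ δ^(1-μ)`. Now let `u_n = ⌊β^n⌋ + k_n`, where `k_n ξ - p_n` approximates
`α^n - ⌊β^n⌋ ξ` within `γ^n` for some `γ < α` with `γ^(1-μ) < β` (possible as `α^(1-μ) < β`).
Then `u_n ξ - p_n = α^n + o(α^n)` and `|k_n| ≲ γ^(n(1-μ)) = o(β^n)`.
-/

/-- The irrationality exponent of a real number, as an extended real:
the infimum of all real `μ` such that `|ξ - p/q| > 1/q^μ` for all integers `p, q`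
with `q` sufficiently large (`⊤` if no such real `μ` exists). -/
noncomputable def irrationalityExponent (ξ : ℝ) : EReal :=
  sInf {x : EReal | ∃ μ : ℝ, x = (μ : EReal) ∧
    ∀ᶠ q : ℕ in atTop, ∀ p : ℤ, |ξ - (p : ℝ) / (q : ℝ)| > 1 / (q : ℝ) ^ μ}

/-- `|ξ - p/q| ≥ c / q^μ` for every fraction `p/q`, multiplied through by `q`. -/
def DiophantineWith (c μ ξ : ℝ) : Prop :=
  ∀ q : ℕ, 0 < q → ∀ p : ℤ, c * (q : ℝ) ^ (1 - μ) ≤ |q * ξ - p|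

theorem exists_lt_of_irrationalityExponent_lt {ξ b : ℝ}
    (h : irrationalityExponent ξ < b) :
    ∃ μ < b, ∀ᶠ q : ℕ in atTop, ∀ p : ℤ, |ξ - (p : ℝ) / (q : ℝ)| > 1 / (q : ℝ) ^ μ := by
  obtain ⟨_, ⟨μ, rfl, hμ⟩, hμb⟩ := sInf_lt_iff.mp h
  exact ⟨μ, EReal.coe_lt_coe_iff.mp hμb, hμ⟩

theorem exists_diophantineWith_of_eventually {ξ μ : ℝ} (hξ : Irrational ξ)
    (h : ∀ᶠ q : ℕ in atTop, ∀ p : ℤ, |ξ - (p : ℝ) / (q : ℝ)| > 1 / (q : ℝ) ^ μ) :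
    ∃ c > 0, DiophantineWith c μ ξ := by
  obtain ⟨N, hN⟩ := eventually_atTop.mp h
  have hsmall : ∀ q ∈ Finset.Ico 1 N, ∀ᶠ c in 𝓝 (0 : ℝ),
      c * (q : ℝ) ^ (1 - μ) < |q * ξ - round ((q : ℝ) * ξ)| := by
    intro q hq
    have hpos : 0 < |q * ξ - round ((q : ℝ) * ξ)| := abs_pos.mpr <| sub_ne_zero.mpr <|
      (hξ.natCast_mul (by simp at hq; omega)).ne_int _
    have hlim : Tendsto (fun c : ℝ => c * (q : ℝ) ^ (1 - μ)) (𝓝 0) (𝓝 0) := by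
      simpa using (tendsto_id (x := 𝓝 (0 : ℝ))).mul_const ((q : ℝ) ^ (1 - μ))
    exact hlim.eventually (gt_mem_nhds hpos)
  have hnear : ∀ᶠ c in 𝓝[>] (0 : ℝ), c ≤ 1 ∧ ∀ q ∈ Finset.Ico 1 N,
      c * (q : ℝ) ^ (1 - μ) < |q * ξ - round ((q : ℝ) * ξ)| :=
    nhdsWithin_le_nhds ((eventually_le_nhds one_pos).and ((eventually_all_finset _).mpr hsmall))
  obtain ⟨c, ⟨hc1, hcN⟩, hc0⟩ := (hnear.and self_mem_nhdsWithin).exists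
  refine ⟨c, hc0, fun q hq p => ?_⟩
  by_cases hqN : q < N
  · exact (hcN q (Finset.mem_Ico.mpr ⟨hq, hqN⟩)).le.trans (round_le _ p)
  · have hq' : (0 : ℝ) < q := Nat.cast_pos.mpr hq
    have hlarge := hN q (not_lt.mp hqN) p
    calc c * (q : ℝ) ^ (1 - μ) ≤ (q : ℝ) ^ (1 - μ) :=
          mul_le_of_le_one_left (by positivity) hc1
      _ = q * (1 / (q : ℝ) ^ μ) := by rw [Real.rpow_sub hq', Real.rpow_one]; ring
      _ ≤ q * |ξ - p / q| := by gcongr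
      _ = |q * ξ - p| := by
          rw [← abs_of_pos hq', ← abs_mul, abs_of_pos hq', mul_sub, mul_div_cancel₀ _ hq'.ne']

theorem DiophantineWith.two_le {c μ ξ : ℝ} (h : DiophantineWith c μ ξ) (hc : 0 < c) :
    2 ≤ μ := by
  by_contra! hμ
  set ν := max μ 1
  have hν2 : ν < 2 := max_lt hμ one_lt_two
  have hbound : ∀ n : ℕ, 0 < n → c * (n : ℝ) ^ (2 - ν) < 1 := by
    intro n hn
    obtain ⟨q, hq0, hqn, hq⟩ := Real.exists_nat_abs_mul_sub_round_le ξ hn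
    have hn' : (0 : ℝ) < n := Nat.cast_pos.mpr hn
    have hpow : (n : ℝ) ^ (1 - ν) ≤ (q : ℝ) ^ (1 - μ) :=
      calc (n : ℝ) ^ (1 - ν) ≤ (q : ℝ) ^ (1 - ν) :=
            Real.rpow_le_rpow_of_nonpos (Nat.cast_pos.mpr hq0) (Nat.cast_le.mpr hqn)
              (by linarith [le_max_right μ 1])
        _ ≤ (q : ℝ) ^ (1 - μ) :=
            Real.rpow_le_rpow_of_exponent_le (Nat.one_le_cast.mpr hq0)
              (by linarith [le_max_left μ 1])
    have hdir : c * (n : ℝ) ^ (1 - ν) ≤ 1 / (n + 1) :=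
      (mul_le_mul_of_nonneg_left hpow hc.le).trans ((h q hq0 _).trans hq)
    calc c * (n : ℝ) ^ (2 - ν) = n * (c * (n : ℝ) ^ (1 - ν)) := by
          rw [show 2 - ν = 1 + (1 - ν) by ring, Real.rpow_add hn', Real.rpow_one]; ring
      _ ≤ n * (1 / (n + 1)) := by gcongr
      _ < 1 := by rw [mul_one_div, div_lt_one (by positivity)]; linarith
  have hgrow : Tendsto (fun n : ℕ => (n : ℝ) ^ (2 - ν)) atTop atTop :=
    (tendsto_rpow_atTop (by linarith)).comp tendsto_natCast_atTop_atTop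
  obtain ⟨n, hn, hn0⟩ := ((hgrow.eventually_ge_atTop (1 / c)).and (eventually_gt_atTop 0)).exists
  rw [div_le_iff₀' hc] at hn
  linarith [hbound n hn0]

theorem exists_nat_le_inv_abs_mul_sub_round_lt (ξ : ℝ) {s : ℝ} (hs0 : 0 < s) (hs1 : s ≤ 1) :
    ∃ q : ℕ, 0 < q ∧ (q : ℝ) ≤ s⁻¹ ∧ |q * ξ - round ((q : ℝ) * ξ)| < s := by
  have hn : 0 < ⌊s⁻¹⌋₊ := Nat.floor_pos.mpr (one_le_inv₀ hs0 |>.mpr hs1)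
  obtain ⟨q, hq0, hqn, hq⟩ := Real.exists_nat_abs_mul_sub_round_le ξ hn
  refine ⟨q, hq0, (Nat.cast_le.mpr hqn).trans (Nat.floor_le (by positivity)), hq.trans_lt ?_⟩
  rw [div_lt_iff₀ (by positivity), ← inv_mul_lt_iff₀ hs0, mul_one]
  exact Nat.lt_floor_add_one _

section Round

variable {K : Type*} [Field K] [LinearOrder K] [IsStrictOrderedRing K] [FloorRing K]

theorem abs_round_div_mul_sub_le (y : K) {θ : K} (hθ : θ ≠ 0) :
    |round (y / θ) * θ - y| ≤ |θ| / 2 := by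
  calc |round (y / θ) * θ - y| = |θ| * |y / θ - round (y / θ)| := by
        rw [← abs_mul, abs_sub_comm]; congr 1; field_simp
    _ ≤ |θ| * (1 / 2) := by gcongr; exact abs_sub_round _
    _ = |θ| / 2 := by ring

theorem abs_round_le (x : K) : |(round x : K)| ≤ |x| + 1 / 2 := by
  calc |(round x : K)| = |x - (x - round x)| := by ring_nf
    _ ≤ |x| + |x - round x| := abs_sub _ _
    _ ≤ |x| + 1 / 2 := by gcongr; exact abs_sub_round x

end Round

namespace DiophantineWith

variable {c μ ξ : ℝ}

/-- The witness is a multiple of a Dirichlet approximation `qξ - p` of size `< s`. -/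
theorem exists_approx_half (h : DiophantineWith c μ ξ) (hc : 0 < c) (hμ : 2 ≤ μ)
    {s y : ℝ} (hs0 : 0 < s) (hs1 : s ≤ 1) (hy : |y| ≤ s) :
    ∃ k p : ℤ, |k * ξ - p - y| ≤ s / 2 ∧ |(k : ℝ)| ≤ (c⁻¹ + 1) * s ^ (1 - μ) := by
  obtain ⟨q, hq0, hqs, hθs⟩ := exists_nat_le_inv_abs_mul_sub_round_lt ξ hs0 hs1
  set θ := q * ξ - round ((q : ℝ) * ξ)
  have hq : (0 : ℝ) < q := Nat.cast_pos.mpr hq0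
  have hθ : c * (s ^ (1 - μ))⁻¹ ≤ |θ| :=
    calc c * (s ^ (1 - μ))⁻¹ = c * s⁻¹ ^ (1 - μ) := by rw [Real.inv_rpow hs0.le]
      _ ≤ c * (q : ℝ) ^ (1 - μ) :=
          mul_le_mul_of_nonneg_left (Real.rpow_le_rpow_of_nonpos hq hqs (by linarith)) hc.le
      _ ≤ |θ| := h q hq0 _
  have hcs : 0 < c * (s ^ (1 - μ))⁻¹ := mul_pos hc (inv_pos.mpr (Real.rpow_pos_of_pos hs0 _))
  have hθ0 : 0 < |θ| := hcs.trans_le hθ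
  have hinvθ : |θ|⁻¹ ≤ c⁻¹ * s ^ (1 - μ) :=
    calc |θ|⁻¹ ≤ (c * (s ^ (1 - μ))⁻¹)⁻¹ := inv_anti₀ hcs hθ
      _ = c⁻¹ * s ^ (1 - μ) := by rw [mul_inv, inv_inv]
  have hinvs : s⁻¹ ≤ s ^ (1 - μ) := by
    rw [← Real.rpow_neg_one]; exact Real.rpow_le_rpow_of_exponent_ge hs0 hs1 (by linarith)
  set j := round (y / θ)
  refine ⟨j * q, j * round ((q : ℝ) * ξ), ?_, ?_⟩
  · have hk : ((j * q : ℤ) : ℝ) * ξ - ((j * round ((q : ℝ) * ξ) : ℤ) : ℝ) - y = j * θ - y := by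
      push_cast; ring
    rw [hk]
    exact (abs_round_div_mul_sub_le y (abs_pos.mp hθ0)).trans (by linarith)
  · have hj : |(j : ℝ)| ≤ s / |θ| + 1 / 2 :=
      (abs_round_le _).trans (by rw [abs_div]; gcongr)
    calc |((j * q : ℤ) : ℝ)| = |(j : ℝ)| * q := by push_cast; rw [abs_mul, abs_of_pos hq]
      _ ≤ (s / |θ| + 1 / 2) * s⁻¹ := by gcongr
      _ = |θ|⁻¹ + s⁻¹ / 2 := by field_simp
      _ ≤ c⁻¹ * s ^ (1 - μ) + s ^ (1 - μ) := by gcongr; linarith [inv_pos.mpr hs0]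
      _ = (c⁻¹ + 1) * s ^ (1 - μ) := by ring

theorem exists_approx_of_one_le_two_pow_mul (h : DiophantineWith c μ ξ) (hc : 0 < c)
    (hμ : 2 ≤ μ) (m : ℕ) : ∀ δ : ℝ, 1 ≤ 2 ^ (m + 1) * δ → ∀ y : ℝ,
      ∃ k p : ℤ, |k * ξ - p - y| ≤ δ ∧ |(k : ℝ)| ≤ (c⁻¹ + 1) * δ ^ (1 - μ) := by
  have coarse : ∀ δ : ℝ, 1 ≤ 2 * δ → ∀ y : ℝ,
      ∃ k p : ℤ, |k * ξ - p - y| ≤ δ ∧ |(k : ℝ)| ≤ (c⁻¹ + 1) * δ ^ (1 - μ) := by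
    intro δ hδ y
    refine ⟨0, -round y, ?_, ?_⟩
    · rw [abs_sub_comm]
      simpa using (abs_sub_round y).trans (by linarith)
    · simp only [Int.cast_zero, abs_zero]
      exact mul_nonneg (by positivity) (Real.rpow_nonneg (by linarith) _)
  induction m with
  | zero => simpa using coarse
  | succ m ih =>
    intro δ hm y
    by_cases hδ1 : 1 ≤ 2 * δ
    · exact coarse δ hδ1 y
    have hδ0 : 0 < δ := by
      by_contra! h0; nlinarith [pow_pos (two_pos (α := ℝ)) (m + 2)]
    obtain ⟨k₁, p₁, hk₁, hk₁'⟩ := ih (2 * δ) (by rw [← mul_assoc, ← pow_succ]; exact hm) y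
    obtain ⟨k₂, p₂, hk₂, hk₂'⟩ := exists_approx_half h hc hμ (by positivity) (by linarith)
      (abs_sub_comm y (k₁ * ξ - p₁) ▸ hk₁ : |y - (k₁ * ξ - p₁)| ≤ 2 * δ)
    refine ⟨k₁ + k₂, p₁ + p₂, ?_, ?_⟩
    · calc |((k₁ + k₂ : ℤ) : ℝ) * ξ - ((p₁ + p₂ : ℤ) : ℝ) - y|
            = |k₂ * ξ - p₂ - (y - (k₁ * ξ - p₁))| := by push_cast; ring_nf
        _ ≤ δ := by linarith
    -- two steps at scale `2δ` cost `2 · 2^(1-μ) ≤ 1` times the budget at scale `δ`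
    have hscale : 2 * (2 * δ) ^ (1 - μ) ≤ δ ^ (1 - μ) := by
      rw [Real.mul_rpow zero_le_two hδ0.le, ← mul_assoc]
      have : (2 : ℝ) ^ (1 - μ) ≤ 2 ^ (-1 : ℝ) :=
        Real.rpow_le_rpow_of_exponent_le one_le_two (by linarith)
      rw [Real.rpow_neg_one] at this
      nlinarith [Real.rpow_pos_of_pos hδ0 (1 - μ)]
    calc |((k₁ + k₂ : ℤ) : ℝ)| ≤ |(k₁ : ℝ)| + |(k₂ : ℝ)| := by push_cast; exact abs_add_le _ _
      _ ≤ (c⁻¹ + 1) * (2 * (2 * δ) ^ (1 - μ)) := by linarith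
      _ ≤ (c⁻¹ + 1) * δ ^ (1 - μ) := by gcongr

theorem exists_approx (h : DiophantineWith c μ ξ) (hc : 0 < c) (hμ : 2 ≤ μ)
    (y : ℝ) {δ : ℝ} (hδ : 0 < δ) :
    ∃ k p : ℤ, |k * ξ - p - y| ≤ δ ∧ |(k : ℝ)| ≤ (c⁻¹ + 1) * δ ^ (1 - μ) := by
  obtain ⟨m, hm⟩ := pow_unbounded_of_one_lt δ⁻¹ one_lt_two
  refine h.exists_approx_of_one_le_two_pow_mul hc hμ m δ ?_ y
  rw [inv_lt_iff_one_lt_mul₀ hδ] at hm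
  rw [pow_succ]
  nlinarith [pow_pos (two_pos (α := ℝ)) m]

end DiophantineWith

theorem rpow_one_sub_lt_of_lt_one_sub_log_div_log {α β μ : ℝ} (hα0 : 0 < α) (hα1 : α < 1)
    (hβ : 0 < β) (hμ : μ < 1 - Real.log β / Real.log α) : α ^ (1 - μ) < β := by
  rw [← Real.log_lt_log_iff (Real.rpow_pos_of_pos hα0 _) hβ, Real.log_rpow hα0,
    ← div_lt_iff_of_neg (Real.log_neg hα0 hα1)]
  linarith

theorem exists_lt_rpow_lt {α β r : ℝ} (hα : 0 < α) (h : α ^ r < β) :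
    ∃ γ, 0 < γ ∧ γ < α ∧ γ ^ r < β := by
  have hcont : ContinuousAt (fun x : ℝ => x ^ r) α :=
    Real.continuousAt_rpow_const _ _ (Or.inl hα.ne')
  have hnear : ∀ᶠ x in 𝓝[<] α, 0 < x ∧ x ^ r < β :=
    nhdsWithin_le_nhds ((lt_mem_nhds hα).and (hcont.eventually (gt_mem_nhds h)))
  obtain ⟨γ, ⟨hγ0, hγβ⟩, hγα⟩ := (hnear.and self_mem_nhdsWithin).exists
  exact ⟨γ, hγ0, hγα, hγβ⟩

theorem exists_sequences_of_approx {ξ C μ α β : ℝ}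
    (hA : ∀ y δ : ℝ, 0 < δ → ∃ k p : ℤ, |k * ξ - p - y| ≤ δ ∧ |(k : ℝ)| ≤ C * δ ^ (1 - μ))
    (hα : 0 < α) (hβ : 1 < β) (hαβ : α ^ (1 - μ) < β) :
    ∃ u v : ℕ → ℤ,
      Tendsto (fun n => ((u n : ℝ) * ξ - (v n : ℝ)) / α ^ n) atTop (𝓝 1) ∧
      Tendsto (fun n => (u n : ℝ) / β ^ n) atTop (𝓝 1) := by
  obtain ⟨γ, hγ0, hγα, hγβ⟩ := exists_lt_rpow_lt hα hαβ
  choose k p hk using fun n : ℕ => hA (α ^ n - ⌊β ^ n⌋₊ * ξ) (γ ^ n) (pow_pos hγ0 n)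
  refine ⟨fun n => ⌊β ^ n⌋₊ + k n, p, ?_, ?_⟩
  · rw [← tendsto_sub_nhds_zero_iff]
    refine squeeze_zero_norm (fun n => ?_) (tendsto_pow_atTop_nhds_zero_of_lt_one
      (div_pos hγ0 hα).le ((div_lt_one hα).mpr hγα))
    have hαn : 0 < α ^ n := pow_pos hα n
    calc ‖(((⌊β ^ n⌋₊ + k n : ℤ) : ℝ) * ξ - p n) / α ^ n - 1‖
        = |k n * ξ - p n - (α ^ n - ⌊β ^ n⌋₊ * ξ)| / α ^ n := by
          rw [Real.norm_eq_abs, ← abs_of_pos hαn, ← abs_div, abs_of_pos hαn]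
          congr 1; push_cast; field_simp; ring
      _ ≤ γ ^ n / α ^ n := by gcongr; exact (hk n).1
      _ = (γ / α) ^ n := (div_pow _ _ _).symm
  · have hβ0 : 0 < β := by linarith
    have hβn : Tendsto (fun n : ℕ => β ^ n) atTop atTop := tendsto_pow_atTop_atTop_of_one_lt hβ
    have hfloor : Tendsto (fun n : ℕ => (⌊β ^ n⌋₊ : ℝ) / β ^ n) atTop (𝓝 1) :=
      tendsto_nat_floor_div_atTop.comp hβn
    have hρ : γ ^ (1 - μ) / β < 1 := (div_lt_one hβ0).mpr hγβ
    have hk0 : Tendsto (fun n : ℕ => (k n : ℝ) / β ^ n) atTop (𝓝 0) := by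
      refine squeeze_zero_norm (fun n => ?_) (by
        simpa using (tendsto_pow_atTop_nhds_zero_of_lt_one
          (div_pos (Real.rpow_pos_of_pos hγ0 _) hβ0).le hρ).const_mul C)
      calc ‖(k n : ℝ) / β ^ n‖ = |(k n : ℝ)| / β ^ n := by
            rw [Real.norm_eq_abs, abs_div, abs_of_pos (pow_pos hβ0 n)]
        _ ≤ C * (γ ^ n) ^ (1 - μ) / β ^ n := by gcongr; exact (hk n).2
        _ = C * (γ ^ (1 - μ) / β) ^ n := by
            rw [← Real.rpow_pow_comm hγ0.le, div_pow, mul_div_assoc]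
    simpa [add_div] using hfloor.add hk0

theorem exists_sequences_geometric (ξ : ℝ) (hξ : Irrational ξ)
    (α β : ℝ) (hα0 : 0 < α) (hα1 : α < 1) (hβ : 1 < β)
    (hμ : irrationalityExponent ξ < ((1 - Real.log β / Real.log α : ℝ) : EReal)) :
    ∃ u v : ℕ → ℤ,
      Tendsto (fun n => ((u n : ℝ) * ξ - (v n : ℝ)) / α ^ n) atTop (𝓝 1) ∧
      Tendsto (fun n => (u n : ℝ) / β ^ n) atTop (𝓝 1) := by
  obtain ⟨μ, hμb, hev⟩ := exists_lt_of_irrationalityExponent_lt hμ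
  obtain ⟨c, hc, hdioph⟩ := exists_diophantineWith_of_eventually hξ hev
  have hμ2 : 2 ≤ μ := hdioph.two_le hc
  exact exists_sequences_of_approx (fun y _ hδ => hdioph.exists_approx hc hμ2 y hδ) hα0 hβ
    (rpow_one_sub_lt_of_lt_one_sub_log_div_log hα0 hα1 (by linarith) hμb)
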